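/- arXiv:2105.12910 — 2 statements merged into one kernel-verified Lean document; each statement's English description precedes it below -/
import Mathlib

section
/- Let n ≥ 2, m_* < m < 1, let a ∈ ℝⁿ be nonzero, let φ(y) := A·(|a|·|y| + a·y)^{−1/(1−m)} on ℝⁿ \ {−τ a/|a| : τ ≥ 0}, and let 0 < γ < 1. Then φ⁻ := (1−γ)·φ satisfies Δ((φ⁻)ᵐ)(y) + a·∇φ⁻(y) = ((1−γ)ᵐ − (1−γ))·Δ(φᵐ)(y) ≥ 0 at every point y of this set; that is, φ⁻ is a (stationary) subsolution of ∂ₜv = Δ(vᵐ) + a·∇v. -/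
/-!
Write `u y = ‖a‖ ‖y‖ + ⟪a, y⟫`. Off the ray `{u = 0}` one has `‖∇u‖² = 2 ‖a‖ u / ‖y‖`,
`⟪a, ∇u⟫ = ‖a‖ u / ‖y‖` and `Δu = (n - 1) ‖a‖ / ‖y‖`, so by the chain rule `Δ (c u^p)` and
`⟪a, ∇(c u^p)⟫` are explicit multiples of `‖a‖ u^(p-1) / ‖y‖`. For `φ = A u^q` with
`q = -1/(1-m)` we have `qm - 1 = q`, so `Δ (φ^m)` and `⟪a, ∇φ⟫` are both multiples of
`‖a‖ u^q / ‖y‖`, and `A^(1-m) = m ((n-1) m - (n-3)) / (1-m)` is exactly the value making them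
cancel: `φ` is a stationary solution. Scaling by `1 - γ` multiplies the diffusion term by
`(1-γ)^m` and the drift term by `1 - γ`; since `(1-γ)^m ≥ 1 - γ` and
`Δ (φ^m) = -⟪a, ∇φ⟫ ≥ 0` (as `q < 0`), `(1-γ) φ` is a subsolution.
-/

open scoped RealInnerProductSpace
open Set

/-- The Laplacian of `f : ℝⁿ → ℝ`: the sum of the second derivatives along the
standard orthonormal coordinate directions. -/
noncomputable def lap {n : ℕ} (f : EuclideanSpace ℝ (Fin n) → ℝ)
    (x : EuclideanSpace ℝ (Fin n)) : ℝ :=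
  ∑ i : Fin n, iteratedFDeriv ℝ 2 f x ![EuclideanSpace.single i 1, EuclideanSpace.single i 1]

/-- `m_* = 0` if `n = 2` and `(n-3)/(n-1)` if `n ≥ 3`. -/
noncomputable def mstar (n : ℕ) : ℝ := if n = 2 then 0 else ((n : ℝ) - 3) / ((n : ℝ) - 1)

open Filter Topology InnerProductSpace Laplacian Gradient

section SecondOrderChainRule

variable {E : Type*} [NormedAddCommGroup E] [NormedSpace ℝ E]

theorem fderiv_fderiv_comp_apply {g : ℝ → ℝ} {u : E → ℝ} {y : E}
    (hg : ContDiffAt ℝ 2 g (u y)) (hu : ContDiffAt ℝ 2 u y) (v w : E) :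
    fderiv ℝ (fderiv ℝ (g ∘ u)) y v w =
      deriv (deriv g) (u y) * fderiv ℝ u y v * fderiv ℝ u y w +
        deriv g (u y) * fderiv ℝ (fderiv ℝ u) y v w := by
  have hg' : ∀ᶠ z in 𝓝 y, DifferentiableAt ℝ g (u z) :=
    hu.continuousAt.eventually ((hg.eventually (by simp)).mono
      fun _ h => h.differentiableAt (by simp))
  have hu' : ∀ᶠ z in 𝓝 y, DifferentiableAt ℝ u z :=
    (hu.eventually (by simp)).mono fun _ h => h.differentiableAt (by simp)
  have hfderiv : fderiv ℝ (g ∘ u) =ᶠ[𝓝 y] fun z => deriv g (u z) • fderiv ℝ u z := by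
    filter_upwards [hg', hu'] with z hgz huz
    exact (hgz.hasDerivAt.comp_hasFDerivAt z huz.hasFDerivAt).fderiv
  have hdg : HasFDerivAt (fun z => deriv g (u z)) (deriv (deriv g) (u y) • fderiv ℝ u y) y :=
    ((hg.derivWithin (m := 1) (by norm_num)).differentiableAt (by simp)).hasDerivAt
      |>.comp_hasFDerivAt y (hu.differentiableAt (by simp)).hasFDerivAt
  have hdu : HasFDerivAt (fderiv ℝ u) (fderiv ℝ (fderiv ℝ u) y) y :=
    ((hu.fderiv_right (m := 1) (by norm_num)).differentiableAt (by simp)).hasFDerivAt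
  rw [hfderiv.fderiv_eq, fderiv_fun_smul hdg.differentiableAt hdu.differentiableAt, hdg.fderiv]
  simp only [add_apply, smul_apply, ContinuousLinearMap.smulRight_apply, smul_eq_mul]
  ring

end SecondOrderChainRule

section ParabolicCoord

variable {E : Type*} [NormedAddCommGroup E] [InnerProductSpace ℝ E]

/-- Its level sets are the paraboloids of revolution with focus `0` and axis `ℝ • a`. -/
def parabolicCoord (a y : E) : ℝ := ‖a‖ * ‖y‖ + ⟪a, y⟫

theorem parabolicCoord_nonneg (a y : E) : 0 ≤ parabolicCoord a y := by
  have := neg_le_of_abs_le (abs_real_inner_le_norm a y)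
  unfold parabolicCoord
  linarith

theorem ne_zero_of_parabolicCoord_pos {a y : E} (h : 0 < parabolicCoord a y) : y ≠ 0 := by
  rintro rfl
  simp [parabolicCoord] at h

theorem parabolicCoord_pos {a y : E} (ha : a ≠ 0)
    (hy : ¬ ∃ τ : ℝ, 0 ≤ τ ∧ y = -(τ • (‖a‖⁻¹ • a))) : 0 < parabolicCoord a y := by
  refine (parabolicCoord_nonneg a y).lt_of_ne fun h => hy ⟨‖y‖, norm_nonneg y, ?_⟩
  have hcs : ⟪-a, y⟫ = ‖-a‖ * ‖y‖ := by
    rw [inner_neg_left, norm_neg]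
    unfold parabolicCoord at h
    linarith
  rw [inner_eq_norm_mul_iff_real, norm_neg] at hcs
  rw [smul_smul, mul_comm, ← smul_smul, ← smul_neg, ← smul_neg, hcs,
    inv_smul_smul₀ (norm_ne_zero_iff.2 ha)]

theorem contDiffAt_parabolicCoord (a : E) {y : E} (hy : y ≠ 0) {n : WithTop ℕ∞} :
    ContDiffAt ℝ n (parabolicCoord a) y :=
  (contDiffAt_const.mul (contDiffAt_norm ℝ hy)).add (contDiffAt_const.inner ℝ contDiffAt_id)

end ParabolicCoord

section Gradient

variable {E : Type*} [NormedAddCommGroup E] [InnerProductSpace ℝ E] [CompleteSpace E]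

theorem HasGradientAt.const_mul_rpow {u : E → ℝ} {v y : E} (h : HasGradientAt u v y)
    (hpos : 0 < u y) (c p : ℝ) :
    HasGradientAt (fun z => c * u z ^ p) ((c * p * u y ^ (p - 1)) • v) y := by
  rw [hasGradientAt_iff_hasFDerivAt] at h ⊢
  refine ((h.rpow_const (p := p) (Or.inl hpos.ne')).const_mul c).congr_fderiv ?_
  rw [map_smul, smul_smul, mul_assoc]

theorem hasGradientAt_norm_sq (y : E) : HasGradientAt (fun z => ‖z‖ ^ 2) ((2 : ℝ) • y) y := by
  rw [hasGradientAt_iff_hasFDerivAt]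
  refine (hasStrictFDerivAt_norm_sq y).hasFDerivAt.congr_fderiv ?_
  ext
  simp

theorem hasGradientAt_norm {y : E} (hy : y ≠ 0) : HasGradientAt (‖·‖) (‖y‖⁻¹ • y) y := by
  have hy' : 0 < ‖y‖ := norm_pos_iff.2 hy
  have h := (hasGradientAt_norm_sq y).const_mul_rpow (by positivity) 1 (1 / 2)
  have hsqrt : (fun z : E => 1 * (‖z‖ ^ 2) ^ (1 / 2 : ℝ)) = (‖·‖) := by
    funext z
    rw [one_mul, ← Real.sqrt_eq_rpow, Real.sqrt_sq (norm_nonneg z)]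
  rw [hsqrt, smul_smul, Real.rpow_sub (by positivity), ← Real.sqrt_eq_rpow,
    Real.sqrt_sq hy'.le, Real.rpow_one] at h
  convert h using 2
  field_simp

theorem hasGradientAt_inner_left (a y : E) : HasGradientAt (fun z => ⟪a, z⟫) a y := by
  rw [hasGradientAt_iff_hasFDerivAt]
  exact (toDual ℝ E a).hasFDerivAt

theorem hasGradientAt_parabolicCoord (a : E) {y : E} (hy : y ≠ 0) :
    HasGradientAt (parabolicCoord a) (‖a‖ • ‖y‖⁻¹ • y + a) y := by
  have hn := hasGradientAt_iff_hasFDerivAt.1 (hasGradientAt_norm hy)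
  have hi := hasGradientAt_iff_hasFDerivAt.1 (hasGradientAt_inner_left a y)
  rw [hasGradientAt_iff_hasFDerivAt, map_add, map_smul]
  exact (hn.const_mul ‖a‖).add hi

theorem norm_gradient_parabolicCoord_sq (a : E) {y : E} (hy : y ≠ 0) :
    ‖∇ (parabolicCoord a) y‖ ^ 2 = 2 * ‖a‖ * parabolicCoord a y / ‖y‖ := by
  have hy' : ‖y‖ ≠ 0 := norm_ne_zero_iff.2 hy
  simp only [(hasGradientAt_parabolicCoord a hy).gradient, norm_add_sq_real, norm_smul, norm_inv,
    norm_norm, real_inner_smul_left, real_inner_comm a y, parabolicCoord]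
  field_simp
  ring

theorem inner_gradient_parabolicCoord (a : E) {y : E} (hy : y ≠ 0) :
    ⟪a, ∇ (parabolicCoord a) y⟫ = ‖a‖ * parabolicCoord a y / ‖y‖ := by
  have hy' : ‖y‖ ≠ 0 := norm_ne_zero_iff.2 hy
  simp only [(hasGradientAt_parabolicCoord a hy).gradient, inner_add_right, real_inner_smul_right,
    real_inner_self_eq_norm_sq, parabolicCoord]
  field_simp
  ring

theorem inner_gradient_const_mul_rpow_parabolicCoord {a y : E} (hu : 0 < parabolicCoord a y)
    (c p : ℝ) :
    ⟪a, ∇ (fun z => c * parabolicCoord a z ^ p) y⟫ =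
      c * p * ‖a‖ * parabolicCoord a y ^ p / ‖y‖ := by
  have hy := ne_zero_of_parabolicCoord_pos hu
  have h := (hasGradientAt_parabolicCoord a hy).differentiableAt.hasGradientAt
  rw [(h.const_mul_rpow hu c p).gradient, real_inner_smul_right,
    inner_gradient_parabolicCoord a hy, Real.rpow_sub_one hu.ne']
  field_simp

end Gradient

section Laplacian

variable {E : Type*} [NormedAddCommGroup E] [InnerProductSpace ℝ E] [FiniteDimensional ℝ E]

theorem laplacian_comp {g : ℝ → ℝ} {u : E → ℝ} {y : E}
    (hg : ContDiffAt ℝ 2 g (u y)) (hu : ContDiffAt ℝ 2 u y) :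
    Δ (g ∘ u) y = deriv (deriv g) (u y) * ‖∇ u y‖ ^ 2 + deriv g (u y) * Δ u y := by
  simp only [laplacian_eq_iteratedFDeriv_stdOrthonormalBasis, iteratedFDeriv_two_apply,
    Matrix.cons_val_zero, Matrix.cons_val_one, fderiv_fderiv_comp_apply hg hu,
    ← inner_gradient_left, Finset.sum_add_distrib, ← Finset.mul_sum, mul_assoc, ← sq,
    OrthonormalBasis.sum_sq_inner_left]

theorem laplacian_const_mul_rpow_comp {u : E → ℝ} {y : E} (hu : ContDiffAt ℝ 2 u y)
    (hpos : 0 < u y) (c p : ℝ) :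
    Δ (fun z => c * u z ^ p) y =
      c * p * ((p - 1) * u y ^ (p - 2) * ‖∇ u y‖ ^ 2 + u y ^ (p - 1) * Δ u y) := by
  have h := laplacian_comp (g := fun x => c * x ^ p)
    (contDiffAt_const.mul (Real.contDiffAt_rpow_const_of_ne hpos.ne')) hu
  simp only [deriv_const_mul_field', Real.deriv_rpow_const'] at h
  rw [show (fun z => c * u z ^ p) = (fun x => c * x ^ p) ∘ u from rfl, h]
  ring_nf

theorem laplacian_norm_sq (y : E) : Δ (fun z : E => ‖z‖ ^ 2) y = 2 * Module.finrank ℝ E := by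
  have h : fderiv ℝ (fun z : E => ‖z‖ ^ 2) = ⇑((2 : ℝ) • innerSL ℝ : E →L[ℝ] E →L[ℝ] ℝ) := by
    rw [fderiv_norm_sq]
    ext
    simp
  simp only [laplacian_eq_iteratedFDeriv_stdOrthonormalBasis, iteratedFDeriv_two_apply,
    Matrix.cons_val_zero, Matrix.cons_val_one]
  rw [h, ContinuousLinearMap.fderiv]
  change ∑ i, 2 * ⟪stdOrthonormalBasis ℝ E i, stdOrthonormalBasis ℝ E i⟫ = _
  simp [mul_comm]

-- Compare `Δ ‖·‖² = 2 dim E` with the chain rule `Δ (N ^ 2) = 2 ‖∇N‖² + 2 N ΔN` for `N = ‖·‖`.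
theorem laplacian_norm {y : E} (hy : y ≠ 0) :
    Δ (fun z : E => ‖z‖) y = (Module.finrank ℝ E - 1) / ‖y‖ := by
  have hy' : 0 < ‖y‖ := norm_pos_iff.2 hy
  have h := laplacian_const_mul_rpow_comp (contDiffAt_norm ℝ hy) hy' 1 2
  simp only [Real.rpow_two, one_mul, laplacian_norm_sq, (hasGradientAt_norm hy).gradient,
    norm_smul, norm_inv, norm_norm, inv_mul_cancel₀ hy'.ne'] at h
  norm_num at h
  rw [eq_div_iff hy'.ne']
  linarith

theorem laplacian_inner_left (a y : E) : Δ (fun z => ⟪a, z⟫) y = 0 := by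
  have h : fderiv ℝ (fun z : E => ⟪a, z⟫) = fun _ => innerSL ℝ a :=
    funext fun _ => (innerSL ℝ a).fderiv
  simp [laplacian_eq_iteratedFDeriv_stdOrthonormalBasis, iteratedFDeriv_two_apply, h]

theorem laplacian_parabolicCoord (a : E) {y : E} (hy : y ≠ 0) :
    Δ (parabolicCoord a) y = ‖a‖ * (Module.finrank ℝ E - 1) / ‖y‖ := by
  have h : parabolicCoord a = ‖a‖ • (fun z : E => ‖z‖) + fun z => ⟪a, z⟫ := rfl
  have hnorm : ContDiffAt ℝ 2 (‖a‖ • fun z : E => ‖z‖) y :=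
    contDiffAt_const.smul (contDiffAt_norm ℝ hy)
  have hinner : ContDiffAt ℝ 2 (fun z => ⟪a, z⟫) y := contDiffAt_const.inner ℝ contDiffAt_id
  rw [h, hnorm.laplacian_add hinner, laplacian_smul _ (contDiffAt_norm ℝ hy),
    laplacian_norm hy, laplacian_inner_left, smul_eq_mul, add_zero, mul_div_assoc]

theorem laplacian_const_mul_rpow_parabolicCoord {a y : E} (hu : 0 < parabolicCoord a y)
    (c p : ℝ) :
    Δ (fun z => c * parabolicCoord a z ^ p) y =
      c * p * ‖a‖ * parabolicCoord a y ^ (p - 1) / ‖y‖ *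
        (2 * (p - 1) + Module.finrank ℝ E - 1) := by
  have hy := ne_zero_of_parabolicCoord_pos hu
  have hpow : parabolicCoord a y ^ (p - 2) * parabolicCoord a y =
      parabolicCoord a y ^ (p - 1) := by
    rw [← Real.rpow_add_one hu.ne']
    ring_nf
  rw [laplacian_const_mul_rpow_comp (contDiffAt_parabolicCoord a hy) hu,
    norm_gradient_parabolicCoord_sq a hy,
    laplacian_parabolicCoord a hy, ← hpow]
  field_simp
  ring

theorem laplacian_rpow_const_mul_rpow_parabolicCoord {a y : E} (hu : 0 < parabolicCoord a y)
    {c m q : ℝ} (hc : 0 ≤ c) (hq : q * m - 1 = q) :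
    Δ (fun z => (c * parabolicCoord a z ^ q) ^ m) y =
      c ^ m * (m * (2 * q + Module.finrank ℝ E - 1)) *
        (q * ‖a‖ * parabolicCoord a y ^ q / ‖y‖) := by
  have h : (fun z => (c * parabolicCoord a z ^ q) ^ m) =
      fun z => c ^ m * parabolicCoord a z ^ (q * m) := by
    funext z
    rw [Real.mul_rpow hc (Real.rpow_nonneg (parabolicCoord_nonneg a z) q),
      ← Real.rpow_mul (parabolicCoord_nonneg a z)]
  rw [h, laplacian_const_mul_rpow_parabolicCoord hu, hq]
  ring

end Laplacian

theorem lap_eq_laplacian {n : ℕ} (f : EuclideanSpace ℝ (Fin n) → ℝ) : lap f = Δ f := by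
  rw [laplacian_eq_iteratedFDeriv_orthonormalBasis f (EuclideanSpace.basisFun (Fin n) ℝ)]
  funext x
  simp [lap, EuclideanSpace.basisFun_apply]

theorem pos_of_mstar_lt {n : ℕ} (hn : 2 ≤ n) {m : ℝ} (hm : mstar n < m) :
    0 < m ∧ (n - 3 : ℝ) < (n - 1) * m := by
  unfold mstar at hm
  split_ifs at hm with h
  · subst h
    exact ⟨hm, by norm_num; linarith⟩
  · have hn3 : (3 : ℝ) ≤ n := by exact_mod_cast (show 3 ≤ n by omega)
    rw [div_lt_iff₀ (by linarith)] at hm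
    constructor <;> nlinarith

theorem profileConst_pos_and_rpow_mul {n : ℕ} (hn : 2 ≤ n) {m A : ℝ} (hm : mstar n < m)
    (hm1 : m < 1)
    (hA : A = (((n : ℝ) - 1) * m / (1 - m) * (m - ((n : ℝ) - 3) / ((n : ℝ) - 1)))
        ^ ((1 : ℝ) / (1 - m))) :
    0 < A ∧ A ^ m * (m * (2 * -(1 / (1 - m)) + n - 1)) = -A := by
  obtain ⟨hm0, hmn⟩ := pos_of_mstar_lt hn hm
  have h1m : 0 < 1 - m := by linarith
  have hn1 : (n : ℝ) - 1 ≠ 0 := by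
    have : (2 : ℝ) ≤ n := by exact_mod_cast hn
    linarith
  set B := ((n : ℝ) - 1) * m / (1 - m) * (m - ((n : ℝ) - 3) / ((n : ℝ) - 1))
  have hB_eq : B = m * ((n - 1) * m - (n - 3)) / (1 - m) := by
    simp only [B]
    field_simp
  have hB0 : 0 < B := by
    rw [hB_eq]
    exact div_pos (mul_pos hm0 (by linarith)) h1m
  have hB : B = -(m * (2 * -(1 / (1 - m)) + n - 1)) := by
    rw [hB_eq]
    field_simp
    ring
  have hA0 : 0 < A := hA ▸ Real.rpow_pos_of_pos hB0 _
  refine ⟨hA0, ?_⟩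
  have hAB : A ^ (1 - m) = B := by
    rw [hA, ← Real.rpow_mul hB0.le, one_div_mul_cancel h1m.ne', Real.rpow_one]
  have : A = A ^ m * B := by
    rw [← hAB, ← Real.rpow_add hA0, add_sub_cancel, Real.rpow_one]
  linear_combination this + A ^ m * hB

theorem stmt_5 (n : ℕ) (hn : 2 ≤ n) (m : ℝ) (hm : mstar n < m) (hm1 : m < 1)
    (a : EuclideanSpace ℝ (Fin n)) (ha : a ≠ 0)
    (A : ℝ)
    (hA : A = (((n : ℝ) - 1) * m / (1 - m) * (m - ((n : ℝ) - 3) / ((n : ℝ) - 1)))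
        ^ ((1 : ℝ) / (1 - m)))
    (φ : EuclideanSpace ℝ (Fin n) → ℝ)
    (hφ : ∀ y, φ y = A * (‖a‖ * ‖y‖ + ⟪a, y⟫) ^ (-(1 / (1 - m))))
    (S : Set (EuclideanSpace ℝ (Fin n)))
    (hS : S = {y | ¬ ∃ τ : ℝ, 0 ≤ τ ∧ y = -(τ • (‖a‖⁻¹ • a))})
    (γ : ℝ) (hγ0 : 0 < γ) (hγ1 : γ < 1)
    (ψ : EuclideanSpace ℝ (Fin n) → ℝ)
    (hψ : ∀ y, ψ y = (1 - γ) * φ y) :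
    ∀ y ∈ S,
      lap (fun z => ψ z ^ m) y + ⟪a, gradient ψ y⟫
        = ((1 - γ) ^ m - (1 - γ)) * lap (fun z => φ z ^ m) y ∧
      lap (fun z => ψ z ^ m) y + ⟪a, gradient ψ y⟫ ≥ 0 := by
  intro y hy
  rw [hS] at hy
  have hu := parabolicCoord_pos ha hy
  obtain ⟨hA0, hprofile⟩ := profileConst_pos_and_rpow_mul hn hm hm1 hA
  set q := -(1 / (1 - m)) with hq
  have h1m : 0 < 1 - m := by linarith
  have hq0 : q < 0 := neg_neg_of_pos (one_div_pos.2 h1m)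
  have hqm : q * m - 1 = q := by
    rw [hq]
    field_simp
    ring
  have hφ' : φ = fun z => A * parabolicCoord a z ^ q := funext hφ
  have hψ' : ψ = fun z => (1 - γ) * A * parabolicCoord a z ^ q :=
    funext fun z => by rw [hψ, hφ, mul_assoc]; rfl
  set R := q * ‖a‖ * parabolicCoord a y ^ q / ‖y‖
  have hR : R ≤ 0 := div_nonpos_of_nonpos_of_nonneg (mul_nonpos_of_nonpos_of_nonneg
    (mul_nonpos_of_nonpos_of_nonneg hq0.le (norm_nonneg a)) (Real.rpow_nonneg hu.le q))
    (norm_nonneg y)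
  have hLφ : lap (fun z => φ z ^ m) y = -A * R := by
    rw [lap_eq_laplacian, hφ', laplacian_rpow_const_mul_rpow_parabolicCoord hu hA0.le hqm,
      finrank_euclideanSpace_fin, hprofile]
  have hLψ : lap (fun z => ψ z ^ m) y = -(1 - γ) ^ m * A * R := by
    rw [lap_eq_laplacian, hψ',
      laplacian_rpow_const_mul_rpow_parabolicCoord hu (by positivity) hqm,
      finrank_euclideanSpace_fin, Real.mul_rpow (by linarith) hA0.le]
    linear_combination (1 - γ) ^ m * R * hprofile
  have hGψ : ⟪a, gradient ψ y⟫ = (1 - γ) * A * R := by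
    rw [hψ', inner_gradient_const_mul_rpow_parabolicCoord hu]
    ring
  have hγm : 1 - γ ≤ (1 - γ) ^ m := by
    simpa using Real.rpow_le_rpow_of_exponent_ge (x := 1 - γ) (by linarith) (by linarith) hm1.le
  rw [hLψ, hLφ, hGψ]
  constructor
  · ring
  · nlinarith [mul_nonneg (mul_nonneg hA0.le (neg_nonneg.2 hR)) (sub_nonneg.2 hγm)]
end

section
/- Let ξ satisfy the curve condition, let 0 < r₀ < r̃₀, and assume the functions x ↦ s(x) and x ↦ r(x) are twice differentiable on Γ_{r₀} \ Γ. Then for every x ∈ Γ_{r₀} \ Γ, Δr(x) = [n − 2 − (n−1)·(x − ξ(s(x))) · ξ''(s(x))] / [1 − (x − ξ(s(x))) · ξ''(s(x))] · r(x)⁻¹. -/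
/-!
The footpoint `s y` minimises `σ ↦ ‖y - ξ σ‖`, so `y - ξ (s y) ⊥ ξ' (s y)`, and `r` is touched
from above at `y` by `z ↦ ‖z - ξ (s y)‖`, so `∇r (y) = (y - ξ (s y)) / r y`. Differentiating the
orthogonality relation gives `(1 - q) Ds = ⟪·, ξ'(s)⟫` with `q = ⟪x - ξ (s x), ξ''(s x)⟫`, which
forces `q ≠ 1` because `‖ξ'‖ = 1`. Differentiating the gradient then gives
`D²r (e, e) = (‖e‖² - ⟪e, ξ'⟫² / (1 - q)) / r - ⟪x - ξ (s x), e⟫² / r³`, and summing over an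
orthonormal basis yields `Δr = (n - 1 / (1 - q)) / r - 1 / r`.
-/

open scoped RealInnerProductSpace
open Filter Topology Set

section InnerProductSpace

variable {E F : Type*} [NormedAddCommGroup E] [InnerProductSpace ℝ E]
  [NormedAddCommGroup F] [NormedSpace ℝ F]

theorem HasDerivAt.comp_hasFDerivAt_smulRight {γ : ℝ → F} {γ' : F} {s : E → ℝ}
    {s' : E →L[ℝ] ℝ} {x : E} (hγ : HasDerivAt γ γ' (s x)) (hs : HasFDerivAt s s' x) :
    HasFDerivAt (fun z => γ (s z)) (s'.smulRight γ') x := by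
  refine (hγ.hasFDerivAt.comp x hs).congr_fderiv ?_
  ext v
  simp

theorem hasFDerivAt_norm_sub_const {p y : E} (h : y ≠ p) :
    HasFDerivAt (fun z => ‖z - p‖) (innerSL ℝ (‖y - p‖⁻¹ • (y - p))) y := by
  have hpos : 0 < ‖y - p‖ := norm_pos_iff.2 (sub_ne_zero.2 h)
  have hsqrt := ((hasFDerivAt_id y).sub_const p).norm_sq.sqrt (by positivity)
  simp only [Real.sqrt_sq (norm_nonneg _)] at hsqrt
  refine hsqrt.congr_fderiv ?_
  ext v
  simp only [id_eq, one_div, mul_inv_rev, map_sub, ContinuousLinearMap.comp_id, smul_apply,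
    sub_apply, coe_innerSL_apply, nsmul_eq_mul, Nat.cast_ofNat, smul_eq_mul, map_smul]
  ring

theorem fderiv_eq_innerSL_of_le_norm_sub {f : E → ℝ} {p y : E} (hf : DifferentiableAt ℝ f y)
    (hle : ∀ᶠ z in 𝓝 y, f z ≤ ‖z - p‖) (heq : f y = ‖y - p‖) (hne : y ≠ p) :
    fderiv ℝ f y = innerSL ℝ ((f y)⁻¹ • (y - p)) := by
  have hmax : IsLocalMax (fun z => f z - ‖z - p‖) y := by
    filter_upwards [hle] with z hz
    linarith
  rw [heq, ← sub_eq_zero]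
  exact hmax.hasFDerivAt_eq_zero (hf.hasFDerivAt.sub (hasFDerivAt_norm_sub_const hne))

theorem inner_sub_deriv_eq_zero_of_isLocalMin {ξ : ℝ → E} {y : E} {σ : ℝ}
    (hξ : DifferentiableAt ℝ ξ σ) (hmin : IsLocalMin (fun τ => ‖y - ξ τ‖) σ) :
    ⟪y - ξ σ, deriv ξ σ⟫ = 0 := by
  have hmin_sq : IsLocalMin (fun τ => ‖y - ξ τ‖ ^ 2) σ := by
    filter_upwards [hmin] with τ hτ using pow_le_pow_left₀ (norm_nonneg _) hτ 2
  simpa [inner_neg_right] using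
    hmin_sq.hasDerivAt_eq_zero (hξ.hasDerivAt.const_sub y).norm_sq

theorem fderiv_fderiv_apply_of_eventuallyEq_innerSL {f : E → ℝ} {g : E → E} {g' : E →L[ℝ] E}
    {x : E} (hfg : fderiv ℝ f =ᶠ[𝓝 x] fun z => innerSL ℝ (g z)) (hg : HasFDerivAt g g' x)
    (v w : E) : fderiv ℝ (fderiv ℝ f) x v w = ⟪g' v, w⟫ := by
  have : HasFDerivAt (fderiv ℝ f) ((innerSL ℝ : E →L[ℝ] E →L[ℝ] ℝ).comp g') x :=
    ((innerSL ℝ : E →L[ℝ] E →L[ℝ] ℝ).hasFDerivAt.comp x hg).congr_of_eventuallyEq hfg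
  rw [this.fderiv]
  rfl

end InnerProductSpace

section Curve

variable {E : Type*} [NormedAddCommGroup E] [InnerProductSpace ℝ E] {ξ : ℝ → E} {s : E → ℝ}
  {x : E}

theorem hasFDerivAt_sub_comp (hξ : DifferentiableAt ℝ ξ (s x)) (hs : DifferentiableAt ℝ s x) :
    HasFDerivAt (fun z => z - ξ (s z))
      (ContinuousLinearMap.id ℝ E - (fderiv ℝ s x).smulRight (deriv ξ (s x))) x :=
  (hasFDerivAt_id x).sub (hξ.hasDerivAt.comp_hasFDerivAt_smulRight hs.hasFDerivAt)

theorem inner_deriv_eq_mul_fderiv (hξ : DifferentiableAt ℝ ξ (s x))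
    (hξ' : DifferentiableAt ℝ (deriv ξ) (s x)) (hs : DifferentiableAt ℝ s x)
    (hunit : ‖deriv ξ (s x)‖ = 1)
    (horth : ∀ᶠ z in 𝓝 x, ⟪z - ξ (s z), deriv ξ (s z)⟫ = 0) (v : E) :
    ⟪v, deriv ξ (s x)⟫ = (1 - ⟪x - ξ (s x), deriv (deriv ξ) (s x)⟫) * fderiv ℝ s x v := by
  have hderiv := (hasFDerivAt_sub_comp hξ hs).inner ℝ
    (hξ'.hasDerivAt.comp_hasFDerivAt_smulRight hs.hasFDerivAt)
  have hzero := congrArg (· v) <|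
    hderiv.unique ((hasFDerivAt_const (0 : ℝ) x).congr_of_eventuallyEq horth)
  simp only [ContinuousLinearMap.comp_apply, ContinuousLinearMap.prod_apply,
    sub_apply, ContinuousLinearMap.id_apply,
    ContinuousLinearMap.smulRight_apply, fderivInnerCLM_apply, inner_sub_left,
    real_inner_smul_left, real_inner_smul_right, real_inner_self_eq_norm_sq, hunit,
    zero_apply] at hzero
  rw [inner_sub_left]
  linear_combination hzero

theorem one_sub_inner_ne_zero (hξ : DifferentiableAt ℝ ξ (s x))
    (hξ' : DifferentiableAt ℝ (deriv ξ) (s x)) (hs : DifferentiableAt ℝ s x)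
    (hunit : ‖deriv ξ (s x)‖ = 1)
    (horth : ∀ᶠ z in 𝓝 x, ⟪z - ξ (s z), deriv ξ (s z)⟫ = 0) :
    1 - ⟪x - ξ (s x), deriv (deriv ξ) (s x)⟫ ≠ 0 := by
  intro h
  have := inner_deriv_eq_mul_fderiv hξ hξ' hs hunit horth (deriv ξ (s x))
  rw [h, zero_mul, real_inner_self_eq_norm_sq, hunit] at this
  norm_num at this

theorem fderiv_fderiv_apply_self_of_fderiv_eq {r : E → ℝ} (hξ : DifferentiableAt ℝ ξ (s x))
    (hs : DifferentiableAt ℝ s x) (hr : DifferentiableAt ℝ r x) (hr0 : r x ≠ 0)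
    (hgrad : fderiv ℝ r =ᶠ[𝓝 x] fun z => innerSL ℝ ((r z)⁻¹ • (z - ξ (s z)))) (e : E) :
    fderiv ℝ (fderiv ℝ r) x e e = (r x)⁻¹ * (‖e‖ ^ 2 - fderiv ℝ s x e * ⟪deriv ξ (s x), e⟫)
      - (r x)⁻¹ ^ 3 * ⟪x - ξ (s x), e⟫ ^ 2 := by
  have hr' : HasFDerivAt r (innerSL ℝ ((r x)⁻¹ • (x - ξ (s x)))) x :=
    hr.hasFDerivAt.congr_fderiv hgrad.self_of_nhds
  have hinv := (hasDerivAt_inv hr0).comp_hasFDerivAt x hr'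
  rw [fderiv_fderiv_apply_of_eventuallyEq_innerSL hgrad (hinv.smul (hasFDerivAt_sub_comp hξ hs))]
  simp only [Function.comp_apply, map_smul, map_sub, neg_smul, add_apply, smul_apply, sub_apply,
    ContinuousLinearMap.id_apply, ContinuousLinearMap.smulRight_apply, neg_apply, coe_innerSL_apply,
    smul_eq_mul, inner_add_left, inner_neg_left, inner_sub_left, real_inner_smul_left,
    real_inner_self_eq_norm_sq]
  ring

theorem sum_fderiv_fderiv_orthonormalBasis {ι : Type*} [Fintype ι] (b : OrthonormalBasis ι ℝ E)
    {r : E → ℝ} (hξ : DifferentiableAt ℝ ξ (s x)) (hξ' : DifferentiableAt ℝ (deriv ξ) (s x))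
    (hs : DifferentiableAt ℝ s x) (hunit : ‖deriv ξ (s x)‖ = 1)
    (horth : ∀ᶠ z in 𝓝 x, ⟪z - ξ (s z), deriv ξ (s z)⟫ = 0)
    (hr : DifferentiableAt ℝ r x) (hrx : r x = ‖x - ξ (s x)‖) (hr0 : r x ≠ 0)
    (hgrad : fderiv ℝ r =ᶠ[𝓝 x] fun z => innerSL ℝ ((r z)⁻¹ • (z - ξ (s z)))) :
    ∑ i, fderiv ℝ (fderiv ℝ r) x (b i) (b i)
      = ((Fintype.card ι : ℝ) - 2 - ((Fintype.card ι : ℝ) - 1) * ⟪x - ξ (s x), deriv (deriv ξ) (s x)⟫)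
        / (1 - ⟪x - ξ (s x), deriv (deriv ξ) (s x)⟫) * (r x)⁻¹ := by
  set q := ⟪x - ξ (s x), deriv (deriv ξ) (s x)⟫
  have hq : 1 - q ≠ 0 := one_sub_inner_ne_zero hξ hξ' hs hunit horth
  have hDs (v : E) : fderiv ℝ s x v = ⟪deriv ξ (s x), v⟫ / (1 - q) := by
    rw [eq_div_iff hq, mul_comm, ← inner_deriv_eq_mul_fderiv hξ hξ' hs hunit horth, real_inner_comm]
  calc ∑ i, fderiv ℝ (fderiv ℝ r) x (b i) (b i)
      = ∑ i, ((r x)⁻¹ * (1 - ⟪deriv ξ (s x), b i⟫ ^ 2 / (1 - q))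
          - (r x)⁻¹ ^ 3 * ⟪x - ξ (s x), b i⟫ ^ 2) := by
        refine Finset.sum_congr rfl fun i _ => ?_
        rw [fderiv_fderiv_apply_self_of_fderiv_eq hξ hs hr hr0 hgrad, hDs, b.orthonormal.1 i]
        ring
    _ = (r x)⁻¹ * (Fintype.card ι - ‖deriv ξ (s x)‖ ^ 2 / (1 - q))
          - (r x)⁻¹ ^ 3 * ‖x - ξ (s x)‖ ^ 2 := by
        rw [Finset.sum_sub_distrib, ← Finset.mul_sum, ← Finset.mul_sum, Finset.sum_sub_distrib,
          ← Finset.sum_div, b.sum_sq_inner_left, b.sum_sq_inner_left]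
        simp
    _ = _ := by
        rw [hunit, ← hrx]
        field_simp
        ring

end Curve

theorem lap_eq_sum_fderiv_fderiv {n : ℕ} (f : EuclideanSpace ℝ (Fin n) → ℝ)
    (x : EuclideanSpace ℝ (Fin n)) :
    lap f x = ∑ i, fderiv ℝ (fderiv ℝ f) x (EuclideanSpace.basisFun (Fin n) ℝ i)
      (EuclideanSpace.basisFun (Fin n) ℝ i) := by
  simp [lap, iteratedFDeriv_two_apply]

theorem stmt_10_general (n : ℕ)
    (ξ : ℝ → EuclideanSpace ℝ (Fin n))
    (hξC3 : ContDiff ℝ 3 ξ)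
    (hξ1 : ∀ σ : ℝ, ‖deriv ξ σ‖ = 1)
    (r : EuclideanSpace ℝ (Fin n) → ℝ)
    (hrdef : ∀ x, r x = Metric.infDist x (Set.range ξ))
    (rt0 : ℝ)
    (s : EuclideanSpace ℝ (Fin n) → ℝ)
    (hsdef : ∀ x, r x < rt0 →
      r x = ‖x - ξ (s x)‖ ∧ ∀ σ : ℝ, r x = ‖x - ξ σ‖ → σ = s x)
    (r₀ : ℝ) (hr₀' : r₀ < rt0)
    (hsdiff : ∀ x : EuclideanSpace ℝ (Fin n), r x < r₀ → x ∉ Set.range ξ →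
      ContDiffAt ℝ 2 s x)
    (hrdiff : ∀ x : EuclideanSpace ℝ (Fin n), r x < r₀ → x ∉ Set.range ξ →
      ContDiffAt ℝ 2 r x) :
    ∀ x : EuclideanSpace ℝ (Fin n), r x < r₀ → x ∉ Set.range ξ →
      lap r x = ((n : ℝ) - 2 - ((n : ℝ) - 1) * ⟪x - ξ (s x), deriv (deriv ξ) (s x)⟫)
        / (1 - ⟪x - ξ (s x), deriv (deriv ξ) (s x)⟫) * (r x)⁻¹ := by
  have hξC2 : ContDiff ℝ 2 ξ := hξC3.of_le (by norm_num)
  have hle (y : EuclideanSpace ℝ (Fin n)) (σ : ℝ) : r y ≤ ‖y - ξ σ‖ := by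
    rw [hrdef, ← dist_eq_norm]
    exact Metric.infDist_le_dist_of_mem (mem_range_self σ)
  have hfoot (y) (hy : r y < r₀) : r y = ‖y - ξ (s y)‖ := (hsdef y (hy.trans hr₀')).1
  have hoff (y) (hy : 0 < r y) : y ∉ range ξ := by
    rintro ⟨σ, rfl⟩
    simpa using hy.trans_le (hle (ξ σ) σ)
  intro x hx hxξ
  have hx0 : 0 < r x := by
    rw [hfoot x hx, norm_pos_iff, sub_ne_zero]
    exact fun h => hxξ ⟨s x, h.symm⟩
  have hcont : Continuous r := by
    simpa only [← funext hrdef] using Metric.continuous_infDist_pt (range ξ)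
  have hV : ∀ᶠ y in 𝓝 x, r y < r₀ ∧ 0 < r y :=
    (hcont.continuousAt.eventually_lt continuousAt_const hx).and
      (continuousAt_const.eventually_lt hcont.continuousAt hx0)
  have horth : ∀ᶠ y in 𝓝 x, ⟪y - ξ (s y), deriv ξ (s y)⟫ = 0 := by
    filter_upwards [hV] with y hy
    exact inner_sub_deriv_eq_zero_of_isLocalMin (hξC2.differentiable two_ne_zero _)
      (Eventually.of_forall fun σ => (hfoot y hy.1).symm.trans_le (hle y σ))
  have hgrad : ∀ᶠ y in 𝓝 x, fderiv ℝ r y = innerSL ℝ ((r y)⁻¹ • (y - ξ (s y))) := by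
    filter_upwards [hV] with y hy
    refine fderiv_eq_innerSL_of_le_norm_sub
      ((hrdiff y hy.1 (hoff y hy.2)).differentiableAt two_ne_zero)
      (Eventually.of_forall fun z => hle z (s y)) (hfoot y hy.1) fun h => hoff y hy.2 ⟨s y, h.symm⟩
  rw [lap_eq_sum_fderiv_fderiv, sum_fderiv_fderiv_orthonormalBasis _
    (hξC2.differentiable two_ne_zero _) (hξC2.differentiable_deriv_two _)
    ((hsdiff x hx hxξ).differentiableAt two_ne_zero) (hξ1 _) horth
    ((hrdiff x hx hxξ).differentiableAt two_ne_zero) (hfoot x hx) hx0.ne' hgrad, Fintype.card_fin]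

theorem stmt_10 (n : ℕ) (hn : 2 ≤ n)
    (ξ : ℝ → EuclideanSpace ℝ (Fin n))
    (hξC3 : ContDiff ℝ 3 ξ) (hξinj : Function.Injective ξ)
    (hξ1 : ∀ σ : ℝ, ‖deriv ξ σ‖ = 1)
    (K : ℝ) (hK : 1 < K)
    (hξ2 : ∀ σ : ℝ, ‖deriv (deriv ξ) σ‖ ≤ K)
    (hξ3 : ∀ σ : ℝ, ‖deriv (deriv (deriv ξ)) σ‖ ≤ K)
    (r : EuclideanSpace ℝ (Fin n) → ℝ)
    (hrdef : ∀ x, r x = Metric.infDist x (Set.range ξ))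
    (rt0 : ℝ) (hrt0 : 0 < rt0) (hrt0' : rt0 < (2 * K)⁻¹)
    (s : EuclideanSpace ℝ (Fin n) → ℝ)
    (hsdef : ∀ x, r x < rt0 →
      r x = ‖x - ξ (s x)‖ ∧ ∀ σ : ℝ, r x = ‖x - ξ σ‖ → σ = s x)
    (r₀ : ℝ) (hr₀ : 0 < r₀) (hr₀' : r₀ < rt0)
    (hsdiff : ∀ x : EuclideanSpace ℝ (Fin n), r x < r₀ → x ∉ Set.range ξ →
      ContDiffAt ℝ 2 s x)
    (hrdiff : ∀ x : EuclideanSpace ℝ (Fin n), r x < r₀ → x ∉ Set.range ξ →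
      ContDiffAt ℝ 2 r x) :
    ∀ x : EuclideanSpace ℝ (Fin n), r x < r₀ → x ∉ Set.range ξ →
      lap r x = ((n : ℝ) - 2 - ((n : ℝ) - 1) * ⟪x - ξ (s x), deriv (deriv ξ) (s x)⟫)
        / (1 - ⟪x - ξ (s x), deriv (deriv ξ) (s x)⟫) * (r x)⁻¹ :=
  stmt_10_general n ξ hξC3 hξ1 r hrdef rt0 s hsdef r₀ hr₀' hsdiff hrdiff
end
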